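/- arXiv:2010.09367 — 8 statements merged into one kernel-verified Lean document; each statement's English description precedes it below -/
import Mathlib

section
/- (Theorem 1, sufficiency.) Let A ⊆ X with p(A) > 0 and let ε' ≥ 0. If for every s ∈ S one has e^{-ε'} p(A) ≤ p(A|s) ≤ e^{ε'} p(A), then for every probability mass function R on A the X-invariant randomization Q(x,y) = R(y) attains (ε', A)-log-lift: for every y ∈ A and every s ∈ S, e^{-ε'} p_Y(y) ≤ p_Y(y|s) ≤ e^{ε'} p_Y(y). -/
/-- Theorem 1, sufficiency: if `e^{-ε'} p(A) ≤ p(A|s) ≤ e^{ε'} p(A)`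
for every `s`, then every X-invariant randomization `Q(x,y) = R(y)` attains
`(ε', A)`-log-lift: `e^{-ε'} p_Y(y) ≤ p_Y(y|s) ≤ e^{ε'} p_Y(y)` for all `y ∈ A, s ∈ S`. -/
theorem stmt_1 {S X : Type*} [Fintype S] [Fintype X] [Nonempty S] [Nonempty X]
    (p : S → X → ℝ)
    (hp_nonneg : ∀ s x, 0 ≤ p s x)
    (hp_sum : ∑ s, ∑ x, p s x = 1)
    (pS : S → ℝ) (hpS : ∀ s, pS s = ∑ x, p s x)
    (pX : X → ℝ) (hpX : ∀ x, pX x = ∑ s, p s x)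
    (hpS_pos : ∀ s, 0 < pS s)
    (pXgS : S → X → ℝ) (hpXgS : ∀ s x, pXgS s x = p s x / pS s)
    (A : Finset X)
    (pA : ℝ) (hpA : pA = ∑ x ∈ A, pX x)
    (pAgS : S → ℝ) (hpAgS : ∀ s, pAgS s = ∑ x ∈ A, pXgS s x)
    (hA_pos : 0 < pA)
    (ε' : ℝ) (hε' : 0 ≤ ε')
    (hcond : ∀ s, Real.exp (-ε') * pA ≤ pAgS s ∧ pAgS s ≤ Real.exp ε' * pA)
    (R : X → ℝ) (hR_nonneg : ∀ y ∈ A, 0 ≤ R y) (hR_sum : ∑ y ∈ A, R y = 1)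
    (pY : X → ℝ) (hpY : ∀ y, pY y = ∑ x ∈ A, R y * pX x)
    (pYgS : S → X → ℝ) (hpYgS : ∀ s y, pYgS s y = ∑ x ∈ A, R y * pXgS s x) :
    ∀ y ∈ A, ∀ s,
      Real.exp (-ε') * pY y ≤ pYgS s y ∧ pYgS s y ≤ Real.exp ε' * pY y := by
  intro y hy s
  have hRy := hR_nonneg y hy
  have h1 : pY y = R y * pA := by
    rw [hpY, hpA, ← Finset.mul_sum]
  have h2 : pYgS s y = R y * pAgS s := by
    rw [hpYgS, hpAgS s, ← Finset.mul_sum]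
  obtain ⟨hl, hr⟩ := hcond s
  constructor
  · rw [h1, h2]
    calc Real.exp (-ε') * (R y * pA) = R y * (Real.exp (-ε') * pA) := by ring
      _ ≤ R y * pAgS s := by apply mul_le_mul_of_nonneg_left hl hRy
  · rw [h1, h2]
    calc R y * pAgS s ≤ R y * (Real.exp ε' * pA) := mul_le_mul_of_nonneg_left hr hRy
      _ = Real.exp ε' * (R y * pA) := by ring
end

section
/- (Corollary 1, minimality of ε^c.) Let A ⊆ X with p(A) > 0 and p(A|s) > 0 for all s ∈ S, and set ε^c = max_{s∈S} |log(p(A|s)/p(A))|. Then for every randomization Q on A there exist s ∈ S and y ∈ A with p_Y(y) > 0 such that p_Y(y|s) ≥ e^{ε^c} p_Y(y) or p_Y(y|s) ≤ e^{-ε^c} p_Y(y); that is, no randomization of A can attain an absolute log-lift bound strictly smaller than ε^c on every output pair. -/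
/-!
Choose `s` attaining the maximum in `ε^c` and put `c = p(A|s)/p(A)`, so that `c = e^{ε^c}` or
`c = e^{-ε^c}`. Any randomization `Q` preserves total mass, hence `∑_y p_Y(y|s) = c ∑_y p_Y(y)`,
and `p_Y(y) = 0` forces `p_Y(y|s) = 0`. An average can neither lie strictly above nor strictly
below all of its terms, so some output `y` with `p_Y(y) > 0` has `p_Y(y|s) ≥ c p_Y(y)` and some
has `p_Y(y|s) ≤ c p_Y(y)`.
-/

open Finset

section WeightedAverage

variable {ι R : Type*} [CommRing R] [LinearOrder R] [IsStrictOrderedRing R]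
  {s : Finset ι} {f g : ι → R} {c : R}

theorem Finset.exists_pos_and_mul_le_of_sum_eq_mul_sum (hg : ∀ i ∈ s, 0 ≤ g i)
    (hfg : ∀ i ∈ s, g i = 0 → f i = 0) (hpos : 0 < ∑ i ∈ s, g i)
    (hsum : ∑ i ∈ s, f i = c * ∑ i ∈ s, g i) : ∃ i ∈ s, 0 < g i ∧ c * g i ≤ f i := by
  by_contra! hlt
  have hle : ∀ i ∈ s, f i ≤ c * g i := fun i hi => by
    rcases (hg i hi).lt_or_eq with hgi | hgi
    · exact (hlt i hi hgi).le
    · rw [← hgi, hfg i hi hgi.symm, mul_zero]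
  obtain ⟨i, hi, hgi⟩ := exists_lt_of_sum_lt (s := s) (f := 0) (g := g) (by simpa using hpos)
  have : ∑ i ∈ s, f i < ∑ i ∈ s, c * g i := sum_lt_sum hle ⟨i, hi, hlt i hi hgi⟩
  rw [← mul_sum, ← hsum] at this
  exact this.false

theorem Finset.exists_pos_and_le_mul_of_sum_eq_mul_sum (hg : ∀ i ∈ s, 0 ≤ g i)
    (hfg : ∀ i ∈ s, g i = 0 → f i = 0) (hpos : 0 < ∑ i ∈ s, g i)
    (hsum : ∑ i ∈ s, f i = c * ∑ i ∈ s, g i) : ∃ i ∈ s, 0 < g i ∧ f i ≤ c * g i := by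
  obtain ⟨i, hi, hgi, hle⟩ := exists_pos_and_mul_le_of_sum_eq_mul_sum (f := -f) (c := -c) hg
    (fun i hi h => by simp [hfg i hi h]) hpos (by simp [sum_neg_distrib, hsum])
  exact ⟨i, hi, hgi, by simpa using hle⟩

end WeightedAverage

section Randomization

variable {X R : Type*} {A : Finset X} {Q : X → X → R}

theorem sum_sum_mul_eq_sum_of_sum_eq_one [CommSemiring R] (hQ_sum : ∀ x ∈ A, ∑ y ∈ A, Q x y = 1)
    (w : X → R) :
    ∑ y ∈ A, ∑ x ∈ A, Q x y * w x = ∑ x ∈ A, w x := by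
  rw [sum_comm]
  exact sum_congr rfl fun x hx => by rw [← sum_mul, hQ_sum x hx, one_mul]

theorem sum_mul_eq_zero_of_le_mul [CommSemiring R] [PartialOrder R] [IsOrderedRing R] {y : X}
    (hQ : ∀ x ∈ A, 0 ≤ Q x y) {v w : X → R} {C : R}
    (hv : ∀ x ∈ A, 0 ≤ v x) (hvw : ∀ x ∈ A, v x ≤ C * w x)
    (hw : ∑ x ∈ A, Q x y * w x = 0) : ∑ x ∈ A, Q x y * v x = 0 := by
  refine le_antisymm ?_ (sum_nonneg fun x hx => mul_nonneg (hQ x hx) (hv x hx))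
  calc ∑ x ∈ A, Q x y * v x ≤ ∑ x ∈ A, C * (Q x y * w x) :=
        sum_le_sum fun x hx => mul_left_comm (Q x y) C (w x) ▸
          mul_le_mul_of_nonneg_left (hvw x hx) (hQ x hx)
    _ = 0 := by rw [← mul_sum, hw, mul_zero]

end Randomization

theorem Real.exp_abs_log_eq_or_exp_neg_abs_log_eq {c : ℝ} (hc : 0 < c) :
    Real.exp |Real.log c| = c ∨ Real.exp (-|Real.log c|) = c := by
  rcases abs_choice (Real.log c) with h | h <;> rw [h]
  · exact Or.inl (Real.exp_log hc)
  · exact Or.inr (by rw [neg_neg, Real.exp_log hc])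

theorem stmt_3_general {S X : Type*} [Fintype S] [Nonempty S]
    (p : S → X → ℝ)
    (hp_nonneg : ∀ s x, 0 ≤ p s x)
    (pS : S → ℝ)
    (pX : X → ℝ) (hpX : ∀ x, pX x = ∑ s, p s x)
    (hpS_pos : ∀ s, 0 < pS s)
    (pXgS : S → X → ℝ) (hpXgS : ∀ s x, pXgS s x = p s x / pS s)
    (A : Finset X)
    (pA : ℝ) (hpA : pA = ∑ x ∈ A, pX x)
    (pAgS : S → ℝ) (hpAgS : ∀ s, pAgS s = ∑ x ∈ A, pXgS s x)
    (hA_pos : 0 < pA) (hAgS_pos : ∀ s, 0 < pAgS s)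
    (εc : ℝ)
    (hεc : εc = Finset.univ.sup' Finset.univ_nonempty
      (fun s : S => |Real.log (pAgS s / pA)|))
    (Q : X → X → ℝ)
    (hQ_nonneg : ∀ x ∈ A, ∀ y ∈ A, 0 ≤ Q x y)
    (hQ_sum : ∀ x ∈ A, ∑ y ∈ A, Q x y = 1)
    (pY : X → ℝ) (hpY : ∀ y, pY y = ∑ x ∈ A, Q x y * pX x)
    (pYgS : S → X → ℝ) (hpYgS : ∀ s y, pYgS s y = ∑ x ∈ A, Q x y * pXgS s x) :
    ∃ s : S, ∃ y ∈ A, 0 < pY y ∧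
      (Real.exp εc * pY y ≤ pYgS s y ∨ pYgS s y ≤ Real.exp (-εc) * pY y) := by
  obtain ⟨s, -, hs⟩ := exists_mem_eq_sup' univ_nonempty fun s : S => |Real.log (pAgS s / pA)|
  set c := pAgS s / pA
  have hpX_nonneg : ∀ x, 0 ≤ pX x := fun x => hpX x ▸ sum_nonneg fun s _ => hp_nonneg s x
  have hpXgS_nonneg : ∀ x ∈ A, 0 ≤ pXgS s x := fun x _ =>
    hpXgS s x ▸ div_nonneg (hp_nonneg s x) (hpS_pos s).le
  have hpXgS_le : ∀ x ∈ A, pXgS s x ≤ (pS s)⁻¹ * pX x := fun x _ => by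
    rw [hpXgS, div_eq_inv_mul, hpX]
    exact mul_le_mul_of_nonneg_left (single_le_sum (fun s _ => hp_nonneg s x) (mem_univ s))
      (inv_nonneg.2 (hpS_pos s).le)
  have hpY_nonneg : ∀ y ∈ A, 0 ≤ pY y := fun y hy =>
    hpY y ▸ sum_nonneg fun x hx => mul_nonneg (hQ_nonneg x hx y hy) (hpX_nonneg x)
  have habs_cont : ∀ y ∈ A, pY y = 0 → pYgS s y = 0 := fun y hy h => by
    rw [hpY] at h
    rw [hpYgS]
    exact sum_mul_eq_zero_of_le_mul (fun x hx => hQ_nonneg x hx y hy) hpXgS_nonneg hpXgS_le h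
  have hpY_sum : ∑ y ∈ A, pY y = pA := by
    simp only [hpY, hpA, sum_sum_mul_eq_sum_of_sum_eq_one hQ_sum]
  have hpYgS_sum : ∑ y ∈ A, pYgS s y = c * ∑ y ∈ A, pY y := by
    simp only [hpYgS, hpAgS, sum_sum_mul_eq_sum_of_sum_eq_one hQ_sum, hpY_sum, c,
      div_mul_cancel₀ _ hA_pos.ne']
  have hpY_pos : 0 < ∑ y ∈ A, pY y := hpY_sum ▸ hA_pos
  rcases Real.exp_abs_log_eq_or_exp_neg_abs_log_eq (div_pos (hAgS_pos s) hA_pos) with hc | hc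
  · obtain ⟨y, hy, hpos, hle⟩ := exists_pos_and_mul_le_of_sum_eq_mul_sum hpY_nonneg habs_cont
      hpY_pos hpYgS_sum
    exact ⟨s, y, hy, hpos, Or.inl (by rwa [hεc, hs, hc])⟩
  · obtain ⟨y, hy, hpos, hle⟩ := exists_pos_and_le_mul_of_sum_eq_mul_sum hpY_nonneg habs_cont
      hpY_pos hpYgS_sum
    exact ⟨s, y, hy, hpos, Or.inr (by rwa [hεc, hs, hc])⟩

/-- Corollary 1, minimality of `ε^c`: with
`ε^c = max_{s∈S} |log(p(A|s)/p(A))|`, for every randomization `Q` on `A` there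
exist `s ∈ S` and `y ∈ A` with `p_Y(y) > 0` such that
`p_Y(y|s) ≥ e^{ε^c} p_Y(y)` or `p_Y(y|s) ≤ e^{-ε^c} p_Y(y)`. -/
theorem stmt_3 {S X : Type*} [Fintype S] [Fintype X] [Nonempty S] [Nonempty X]
    (p : S → X → ℝ)
    (hp_nonneg : ∀ s x, 0 ≤ p s x)
    (hp_sum : ∑ s, ∑ x, p s x = 1)
    (pS : S → ℝ) (hpS : ∀ s, pS s = ∑ x, p s x)
    (pX : X → ℝ) (hpX : ∀ x, pX x = ∑ s, p s x)
    (hpS_pos : ∀ s, 0 < pS s)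
    (pXgS : S → X → ℝ) (hpXgS : ∀ s x, pXgS s x = p s x / pS s)
    (A : Finset X)
    (pA : ℝ) (hpA : pA = ∑ x ∈ A, pX x)
    (pAgS : S → ℝ) (hpAgS : ∀ s, pAgS s = ∑ x ∈ A, pXgS s x)
    (hA_pos : 0 < pA) (hAgS_pos : ∀ s, 0 < pAgS s)
    (εc : ℝ)
    (hεc : εc = Finset.univ.sup' Finset.univ_nonempty
      (fun s : S => |Real.log (pAgS s / pA)|))
    (Q : X → X → ℝ)
    (hQ_nonneg : ∀ x ∈ A, ∀ y ∈ A, 0 ≤ Q x y)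
    (hQ_sum : ∀ x ∈ A, ∑ y ∈ A, Q x y = 1)
    (pY : X → ℝ) (hpY : ∀ y, pY y = ∑ x ∈ A, Q x y * pX x)
    (pYgS : S → X → ℝ) (hpYgS : ∀ s y, pYgS s y = ∑ x ∈ A, Q x y * pXgS s x) :
    ∃ s : S, ∃ y ∈ A, 0 < pY y ∧
      (Real.exp εc * pY y ≤ pYgS s y ∨ pYgS s y ≤ Real.exp (-εc) * pY y) :=
  stmt_3_general p hp_nonneg pS pX hpX hpS_pos pXgS hpXgS A pA hpA pAgS hpAgS hA_pos hAgS_pos εc hεc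
    Q hQ_nonneg hQ_sum pY hpY pYgS hpYgS
end

section
/- (Corollary 1, achievability.) Let A ⊆ X with p(A) > 0 and p(A|s) > 0 for all s ∈ S, and set ε^c = max_{s∈S} |log(p(A|s)/p(A))|. For every probability mass function R on A, the X-invariant randomization Q(x,y) = R(y) achieves exactly the optimal absolute log-lift ε^c: the maximum of |log(p_Y(y|s)/p_Y(y))| over all s ∈ S and all y ∈ A with R(y) > 0 equals ε^c. -/
/-- Corollary 1, achievability: for every pmf `R` on `A`, the
X-invariant randomization `Q(x,y) = R(y)` achieves exactly the optimal absolute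
log-lift `ε^c = max_{s∈S} |log(p(A|s)/p(A))|`: the maximum of
`|log(p_Y(y|s)/p_Y(y))|` over all `s ∈ S` and all `y ∈ A` with `R(y) > 0` equals
`ε^c` (formalized as: `ε^c` is an upper bound on these values and is attained). -/
theorem stmt_4 {S X : Type*} [Fintype S] [Fintype X] [Nonempty S] [Nonempty X]
    (p : S → X → ℝ)
    (hp_nonneg : ∀ s x, 0 ≤ p s x)
    (hp_sum : ∑ s, ∑ x, p s x = 1)
    (pS : S → ℝ) (hpS : ∀ s, pS s = ∑ x, p s x)
    (pX : X → ℝ) (hpX : ∀ x, pX x = ∑ s, p s x)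
    (hpS_pos : ∀ s, 0 < pS s)
    (pXgS : S → X → ℝ) (hpXgS : ∀ s x, pXgS s x = p s x / pS s)
    (A : Finset X)
    (pA : ℝ) (hpA : pA = ∑ x ∈ A, pX x)
    (pAgS : S → ℝ) (hpAgS : ∀ s, pAgS s = ∑ x ∈ A, pXgS s x)
    (hA_pos : 0 < pA) (hAgS_pos : ∀ s, 0 < pAgS s)
    (εc : ℝ)
    (hεc : εc = Finset.univ.sup' Finset.univ_nonempty
      (fun s : S => |Real.log (pAgS s / pA)|))
    (R : X → ℝ) (hR_nonneg : ∀ y ∈ A, 0 ≤ R y) (hR_sum : ∑ y ∈ A, R y = 1)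
    (pY : X → ℝ) (hpY : ∀ y, pY y = ∑ x ∈ A, R y * pX x)
    (pYgS : S → X → ℝ) (hpYgS : ∀ s y, pYgS s y = ∑ x ∈ A, R y * pXgS s x) :
    (∀ s : S, ∀ y ∈ A, 0 < R y → |Real.log (pYgS s y / pY y)| ≤ εc) ∧
    (∃ s : S, ∃ y ∈ A, 0 < R y ∧ |Real.log (pYgS s y / pY y)| = εc) := by
  have key : ∀ s y, 0 < R y → pYgS s y / pY y = pAgS s / pA := by
    intro s y hy
    rw [hpYgS, hpY, ← Finset.mul_sum, ← Finset.mul_sum, ← hpA, ← hpAgS,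
      mul_div_mul_left _ _ (ne_of_gt hy)]
  constructor
  · intro s y _ hy
    rw [key s y hy, hεc]
    exact Finset.le_sup' (fun s : S => |Real.log (pAgS s / pA)|) (Finset.mem_univ s)
  · obtain ⟨y, hyA, hy⟩ : ∃ y ∈ A, 0 < R y := by
      by_contra h
      push_neg at h
      have : ∑ y ∈ A, R y = 0 := Finset.sum_eq_zero fun y hyA =>
        le_antisymm (h y hyA) (hR_nonneg y hyA)
      simp [this] at hR_sum
    obtain ⟨s, _, hs⟩ := Finset.exists_mem_eq_sup' (Finset.univ_nonempty (α := S))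
      (fun s : S => |Real.log (pAgS s / pA)|)
    exact ⟨s, y, hyA, hy, by rw [key s y hy, hεc, hs]⟩
end

section
/- (Appendix B extremal claim.) Let A ⊆ X with p(A) > 0, let s̄ ∈ S maximize p(A|s)/p(A) over s ∈ S, and let s̲ ∈ S minimize it. Then for every randomization Q on A: (a) there exists y ∈ A with p_Y(y) > 0 such that p_Y(y|s̄) ≥ (p(A|s̄)/p(A)) · p_Y(y); and (b) there exists y' ∈ A with p_Y(y') > 0 such that p_Y(y'|s̲) ≤ (p(A|s̲)/p(A)) · p_Y(y'). In particular, no randomization can make the lift strictly smaller than p(A|s̄)/p(A) for s̄ at every output and simultaneously strictly larger than p(A|s̲)/p(A) for s̲ at every output. -/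
/-- Appendix B extremal claim: if `s̄` maximizes and `s̲` minimizes
`p(A|s)/p(A)`, then for every randomization `Q` on `A` there is an output
`y ∈ A` with `p_Y(y) > 0` whose lift for `s̄` is at least `p(A|s̄)/p(A)`, and an
output `y' ∈ A` with `p_Y(y') > 0` whose lift for `s̲` is at most `p(A|s̲)/p(A)`. -/
theorem stmt_5 {S X : Type*} [Fintype S] [Fintype X] [Nonempty S] [Nonempty X]
    (p : S → X → ℝ)
    (hp_nonneg : ∀ s x, 0 ≤ p s x)
    (hp_sum : ∑ s, ∑ x, p s x = 1)
    (pS : S → ℝ) (hpS : ∀ s, pS s = ∑ x, p s x)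
    (pX : X → ℝ) (hpX : ∀ x, pX x = ∑ s, p s x)
    (hpS_pos : ∀ s, 0 < pS s)
    (pXgS : S → X → ℝ) (hpXgS : ∀ s x, pXgS s x = p s x / pS s)
    (A : Finset X)
    (pA : ℝ) (hpA : pA = ∑ x ∈ A, pX x)
    (pAgS : S → ℝ) (hpAgS : ∀ s, pAgS s = ∑ x ∈ A, pXgS s x)
    (hA_pos : 0 < pA)
    (sbar slow : S)
    (hsbar : ∀ s, pAgS s / pA ≤ pAgS sbar / pA)
    (hslow : ∀ s, pAgS slow / pA ≤ pAgS s / pA)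
    (Q : X → X → ℝ)
    (hQ_nonneg : ∀ x ∈ A, ∀ y ∈ A, 0 ≤ Q x y)
    (hQ_sum : ∀ x ∈ A, ∑ y ∈ A, Q x y = 1)
    (pY : X → ℝ) (hpY : ∀ y, pY y = ∑ x ∈ A, Q x y * pX x)
    (pYgS : S → X → ℝ) (hpYgS : ∀ s y, pYgS s y = ∑ x ∈ A, Q x y * pXgS s x) :
    (∃ y ∈ A, 0 < pY y ∧ (pAgS sbar / pA) * pY y ≤ pYgS sbar y) ∧
    (∃ y' ∈ A, 0 < pY y' ∧ pYgS slow y' ≤ (pAgS slow / pA) * pY y') := by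
  have hpX_nonneg : ∀ x, 0 ≤ pX x := fun x => by
    rw [hpX]; exact Finset.sum_nonneg fun s _ => hp_nonneg s x
  have hpXgS_nonneg : ∀ s x, 0 ≤ pXgS s x := fun s x => by
    rw [hpXgS]; exact div_nonneg (hp_nonneg s x) (hpS_pos s).le
  have hpY_nonneg : ∀ y ∈ A, 0 ≤ pY y := fun y hy => by
    rw [hpY]
    exact Finset.sum_nonneg fun x hx => mul_nonneg (hQ_nonneg x hx y hy) (hpX_nonneg x)
  -- pX x = 0 implies pXgS s x = 0
  have hzeroX : ∀ x, pX x = 0 → ∀ s, pXgS s x = 0 := by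
    intro x hx s
    have : p s x = 0 := by
      have h := (Finset.sum_eq_zero_iff_of_nonneg
        (fun s' _ => hp_nonneg s' x)).mp ((hpX x).symm.trans hx)
      exact h s (Finset.mem_univ s)
    rw [hpXgS, this, zero_div]
  -- pY y = 0 implies pYgS s y = 0
  have hzero : ∀ y ∈ A, pY y = 0 → ∀ s, pYgS s y = 0 := by
    intro y hy h0 s
    have hterm := (Finset.sum_eq_zero_iff_of_nonneg
      (fun x hx => mul_nonneg (hQ_nonneg x hx y hy) (hpX_nonneg x))).mp
      ((hpY y).symm.trans h0)
    rw [hpYgS]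
    apply Finset.sum_eq_zero
    intro x hx
    rcases mul_eq_zero.mp (hterm x hx) with h | h
    · rw [h, zero_mul]
    · rw [hzeroX x h s, mul_zero]
  -- sums over A
  have hsumY : ∑ y ∈ A, pY y = pA := by
    simp_rw [hpY]
    rw [Finset.sum_comm, hpA]
    refine Finset.sum_congr rfl fun x hx => ?_
    rw [← Finset.sum_mul, hQ_sum x hx, one_mul]
  have hsumYgS : ∀ s, ∑ y ∈ A, pYgS s y = pAgS s := by
    intro s
    simp_rw [hpYgS]
    rw [Finset.sum_comm, hpAgS]
    refine Finset.sum_congr rfl fun x hx => ?_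
    rw [← Finset.sum_mul, hQ_sum x hx, one_mul]
  -- there exists y with pY y > 0
  have hexpos : ∃ y ∈ A, 0 < pY y := by
    by_contra h
    push_neg at h
    have : ∑ y ∈ A, pY y ≤ 0 := Finset.sum_nonpos h
    rw [hsumY] at this
    linarith
  constructor
  · by_contra h
    push_neg at h
    have hlt : ∑ y ∈ A, pYgS sbar y < ∑ y ∈ A, (pAgS sbar / pA) * pY y := by
      apply Finset.sum_lt_sum
      · intro y hy
        rcases lt_or_eq_of_le (hpY_nonneg y hy) with hpos | heq
        · exact (h y hy hpos).le
        · rw [hzero y hy heq.symm sbar, ← heq, mul_zero]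
      · obtain ⟨y, hy, hpos⟩ := hexpos
        exact ⟨y, hy, h y hy hpos⟩
    rw [hsumYgS, ← Finset.mul_sum, hsumY, div_mul_cancel₀ _ (ne_of_gt hA_pos)] at hlt
    linarith
  · by_contra h
    push_neg at h
    have hlt : ∑ y ∈ A, (pAgS slow / pA) * pY y < ∑ y ∈ A, pYgS slow y := by
      apply Finset.sum_lt_sum
      · intro y hy
        rcases lt_or_eq_of_le (hpY_nonneg y hy) with hpos | heq
        · exact (h y hy hpos).le
        · rw [hzero y hy heq.symm slow, ← heq, mul_zero]
      · obtain ⟨y, hy, hpos⟩ := hexpos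
        exact ⟨y, hy, h y hy hpos⟩
    rw [hsumYgS, ← Finset.mul_sum, hsumY, div_mul_cancel₀ _ (ne_of_gt hA_pos)] at hlt
    linarith
end

section
/- (Effective log-lift of the watchdog mechanism.) Let X be partitioned into disjoint sets B and A with p(A) > 0 and p(A|s) > 0 for all s ∈ S, and suppose p(x) > 0, p(x|s) > 0 and |log(p(x|s)/p(x))| ≤ ε for every x ∈ B and s ∈ S. Let R be a probability mass function on A and consider the watchdog mechanism releasing Y ∈ X with p_Y(y) = p(y) and p_Y(y|s) = p(y|s) for y ∈ B, and p_Y(y) = R(y) p(A) and p_Y(y|s) = R(y) p(A|s) for y ∈ A. Then, with ε^c = max_{s∈S} |log(p(A|s)/p(A))|, for every s ∈ S and every y ∈ X with p_Y(y) > 0 one has |log(p_Y(y|s)/p_Y(y))| ≤ max(ε, ε^c). -/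
theorem stmt_6_general {S X : Type*} [Fintype S] [Fintype X] [DecidableEq X] [Nonempty S]
    (pX : X → ℝ)
    (pXgS : S → X → ℝ)
    (B A : Finset X) (hpart : B ∪ A = Finset.univ)
    (pA : ℝ)
    (pAgS : S → ℝ)
    (ε : ℝ)
    (hB_lift : ∀ s, ∀ x ∈ B, |Real.log (pXgS s x / pX x)| ≤ ε)
    (R : X → ℝ)
    (pY : X → ℝ)
    (hpYB : ∀ y ∈ B, pY y = pX y)
    (hpYA : ∀ y ∈ A, pY y = R y * pA)
    (pYgS : S → X → ℝ)
    (hpYgSB : ∀ s, ∀ y ∈ B, pYgS s y = pXgS s y)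
    (hpYgSA : ∀ s, ∀ y ∈ A, pYgS s y = R y * pAgS s)
    (εc : ℝ)
    (hεc : εc = Finset.univ.sup' Finset.univ_nonempty
      (fun s : S => |Real.log (pAgS s / pA)|)) :
    ∀ s : S, ∀ y : X, 0 < pY y →
      |Real.log (pYgS s y / pY y)| ≤ max ε εc := by
  intro s y hy
  rcases Finset.mem_union.mp (hpart ▸ Finset.mem_univ y) with hyB | hyA
  · rw [hpYgSB s y hyB, hpYB y hyB]
    exact le_max_of_le_left (hB_lift s y hyB)
  · have hR : R y ≠ 0 := by
      rintro hR0
      simp [hpYA y hyA, hR0] at hy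
    -- The factor `R y` cancels: every symbol of `A` has the lift of the event `A` itself.
    rw [hpYgSA s y hyA, hpYA y hyA, mul_div_mul_left _ _ hR, hεc]
    exact le_max_of_le_right
      (Finset.le_sup' (fun s : S => |Real.log (pAgS s / pA)|) (Finset.mem_univ s))

/-- Effective log-lift of the watchdog mechanism: `X` is
partitioned into `B` (published unperturbed, abs-log-lift at most `ε`) and `A`
(merged via an X-invariant pmf `R`); then the released variable `Y` satisfies
`|log(p_Y(y|s)/p_Y(y))| ≤ max(ε, ε^c)` for every `s` and every `y` with
`p_Y(y) > 0`, where `ε^c = max_{s∈S} |log(p(A|s)/p(A))|`. -/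
theorem stmt_6 {S X : Type*} [Fintype S] [Fintype X] [DecidableEq X] [Nonempty S] [Nonempty X]
    (p : S → X → ℝ)
    (hp_nonneg : ∀ s x, 0 ≤ p s x)
    (hp_sum : ∑ s, ∑ x, p s x = 1)
    (pS : S → ℝ) (hpS : ∀ s, pS s = ∑ x, p s x)
    (pX : X → ℝ) (hpX : ∀ x, pX x = ∑ s, p s x)
    (hpS_pos : ∀ s, 0 < pS s)
    (pXgS : S → X → ℝ) (hpXgS : ∀ s x, pXgS s x = p s x / pS s)
    (B A : Finset X) (hdisj : Disjoint B A) (hpart : B ∪ A = Finset.univ)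
    (pA : ℝ) (hpA : pA = ∑ x ∈ A, pX x)
    (pAgS : S → ℝ) (hpAgS : ∀ s, pAgS s = ∑ x ∈ A, pXgS s x)
    (hA_pos : 0 < pA) (hAgS_pos : ∀ s, 0 < pAgS s)
    (ε : ℝ)
    (hB_pos : ∀ x ∈ B, 0 < pX x)
    (hBgS_pos : ∀ s, ∀ x ∈ B, 0 < pXgS s x)
    (hB_lift : ∀ s, ∀ x ∈ B, |Real.log (pXgS s x / pX x)| ≤ ε)
    (R : X → ℝ) (hR_nonneg : ∀ y ∈ A, 0 ≤ R y) (hR_sum : ∑ y ∈ A, R y = 1)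
    (pY : X → ℝ)
    (hpYB : ∀ y ∈ B, pY y = pX y)
    (hpYA : ∀ y ∈ A, pY y = R y * pA)
    (pYgS : S → X → ℝ)
    (hpYgSB : ∀ s, ∀ y ∈ B, pYgS s y = pXgS s y)
    (hpYgSA : ∀ s, ∀ y ∈ A, pYgS s y = R y * pAgS s)
    (εc : ℝ)
    (hεc : εc = Finset.univ.sup' Finset.univ_nonempty
      (fun s : S => |Real.log (pAgS s / pA)|)) :
    ∀ s : S, ∀ y : X, 0 < pY y →
      |Real.log (pYgS s y / pY y)| ≤ max ε εc :=
  stmt_6_general pX pXgS B A hpart pA pAgS ε hB_lift R pY hpYB hpYA pYgS hpYgSB hpYgSA εc hεc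
end

section
/- (Utility of the watchdog mechanism, equations (8)–(9).) Let X be partitioned into disjoint sets B and A with p(A) > 0 and p(x) > 0 for all x ∈ X. Let R be a probability mass function on A and consider the mechanism with p(Y = x' | X = x) equal to the indicator 1{x' = x} for x ∈ B, equal to R(x') for x ∈ A and x' ∈ A, and 0 otherwise; let p_{XY} be the induced joint distribution of (X,Y) and p_Y the induced distribution of Y. Then, with the convention 0·log 0 = 0, the mutual information I(X;Y) = ∑_{x,y} p_{XY}(x,y) log(p_{XY}(x,y)/(p(x) p_Y(y))) satisfies I(X;Y) = H(X) − p(A)·H(q), where H(X) = −∑_{x∈X} p(x) log p(x), q(x) = p(x)/p(A) for x ∈ A, and H(q) = −∑_{x∈A} q(x) log q(x). -/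
/-!
Every output `y` with `p(x, y) > 0` reveals a fixed amount about `x`: for `x ∈ B` the output is
`x` itself, so `p(x, y) / (p(x) p(y)) = 1 / p(x)`; for `x ∈ A` the output only reveals that
`x ∈ A`, and `p(x, y) / (p(x) p(y)) = 1 / p(A)`. Hence
`I(X;Y) = -∑_{x ∈ B} p(x) log p(x) - p(A) log p(A)`, and the grouping rule
`p(A) H(q) = -∑_{x ∈ A} p(x) log p(x) + p(A) log p(A)` turns this into `H(X) - p(A) H(q)`.
-/

open Finset Real

lemma sum_ite_mul_log_eq_of_forall_ne_zero {ι : Type*} (s : Finset ι) (f g : ι → ℝ) (c : ℝ)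
    (h : ∀ i ∈ s, f i ≠ 0 → g i = c) :
    ∑ i ∈ s, (if f i = 0 then 0 else f i * log (g i)) = (∑ i ∈ s, f i) * log c := by
  rw [sum_mul]
  refine sum_congr rfl fun i hi => ?_
  split_ifs with hf
  · rw [hf, zero_mul]
  · rw [h i hi hf]

lemma sum_mul_sum_div_mul_log_div {ι : Type*} (s : Finset ι) (w : ι → ℝ)
    (hw : ∀ i ∈ s, w i ≠ 0) (hs : ∑ i ∈ s, w i ≠ 0) :
    (∑ i ∈ s, w i) * ∑ i ∈ s, w i / (∑ j ∈ s, w j) * log (w i / ∑ j ∈ s, w j)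
      = ∑ i ∈ s, w i * log (w i) - (∑ i ∈ s, w i) * log (∑ i ∈ s, w i) := by
  rw [mul_sum, sum_mul, ← sum_sub_distrib]
  refine sum_congr rfl fun i hi => ?_
  rw [log_div (hw i hi) hs]
  field_simp

section Watchdog

variable {X : Type*} [Fintype X] [DecidableEq X] {B A : Finset X} {R : X → ℝ} {M : X → X → ℝ}

lemma sum_univ_eq_add_of_partition (hdisj : Disjoint B A) (hpart : B ∪ A = univ) (f : X → ℝ) :
    ∑ x, f x = ∑ x ∈ B, f x + ∑ x ∈ A, f x := by
  rw [← sum_union hdisj, hpart]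

lemma mem_of_not_mem_of_union_eq_univ (hpart : B ∪ A = univ) {x : X} (hx : x ∉ B) : x ∈ A :=
  (mem_union.mp (hpart ▸ mem_univ x)).resolve_left hx

structure IsWatchdogKernel (B A : Finset X) (R : X → ℝ) (M : X → X → ℝ) : Prop where
  eq_ite_of_mem_left : ∀ x ∈ B, ∀ x', M x x' = if x' = x then 1 else 0
  eq_of_mem_right : ∀ x ∈ A, ∀ x' ∈ A, M x x' = R x'
  eq_zero_of_mem_right : ∀ x ∈ A, ∀ x' ∉ A, M x x' = 0

lemma IsWatchdogKernel.sum_row_eq_one (hpart : B ∪ A = univ) (hR_sum : ∑ y ∈ A, R y = 1)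
    (hM : IsWatchdogKernel B A R M) (x : X) :
    ∑ y, M x y = 1 := by
  by_cases hx : x ∈ B
  · simp only [hM.eq_ite_of_mem_left x hx, sum_ite_eq', mem_univ, if_true]
  · have hxA := mem_of_not_mem_of_union_eq_univ hpart hx
    rw [← sum_subset (subset_univ A) fun y _ hy => hM.eq_zero_of_mem_right x hxA y hy,
      ← hR_sum]
    exact sum_congr rfl (hM.eq_of_mem_right x hxA)

lemma IsWatchdogKernel.sum_mul_apply_of_mem_left (hdisj : Disjoint B A) (hpart : B ∪ A = univ)
    (hM : IsWatchdogKernel B A R M) (pX : X → ℝ) {y : X} (hy : y ∈ B) :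
    ∑ x, pX x * M x y = pX y := by
  rw [sum_eq_single y]
  · rw [hM.eq_ite_of_mem_left y hy, if_pos rfl, mul_one]
  · intro x _ hxy
    by_cases hx : x ∈ B
    · rw [hM.eq_ite_of_mem_left x hx, if_neg (Ne.symm hxy), mul_zero]
    · rw [hM.eq_zero_of_mem_right x (mem_of_not_mem_of_union_eq_univ hpart hx) y
        (disjoint_left.mp hdisj hy), mul_zero]
  · exact fun h => absurd (mem_univ y) h

lemma IsWatchdogKernel.sum_mul_apply_of_mem_right (hdisj : Disjoint B A) (hpart : B ∪ A = univ)
    (hM : IsWatchdogKernel B A R M) (pX : X → ℝ) {y : X} (hy : y ∈ A) :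
    ∑ x, pX x * M x y = (∑ x ∈ A, pX x) * R y := by
  have houtside : ∀ x ∉ A, pX x * M x y = 0 := fun x hx => by
    have hxB : x ∈ B := by_contra fun h => hx (mem_of_not_mem_of_union_eq_univ hpart h)
    rw [hM.eq_ite_of_mem_left x hxB, if_neg fun h : y = x => disjoint_left.mp hdisj hxB (h ▸ hy),
      mul_zero]
  rw [← sum_subset (subset_univ A) fun x _ hx => houtside x hx, sum_mul]
  exact sum_congr rfl fun x hx => by rw [hM.eq_of_mem_right x hx y hy]

lemma IsWatchdogKernel.sum_ite_mul_log_of_mem_left (hdisj : Disjoint B A) (hpart : B ∪ A = univ)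
    (hR_sum : ∑ y ∈ A, R y = 1)
    (hM : IsWatchdogKernel B A R M) (pX : X → ℝ) {x : X} (hx : x ∈ B) :
    (∑ y, if pX x * M x y = 0 then 0
      else pX x * M x y * log (pX x * M x y / (pX x * ∑ x', pX x' * M x' y)))
      = pX x * log (pX x)⁻¹ := by
  rw [sum_ite_mul_log_eq_of_forall_ne_zero _ _ _ _ fun y _ h => ?_, ← mul_sum,
    hM.sum_row_eq_one hpart hR_sum, mul_one]
  rw [hM.eq_ite_of_mem_left x hx] at h ⊢
  obtain rfl : y = x := by_contra fun hyx => h (by rw [if_neg hyx, mul_zero])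
  rw [if_pos rfl, hM.sum_mul_apply_of_mem_left hdisj hpart pX hx]
  field_simp [left_ne_zero_of_mul h]

lemma IsWatchdogKernel.sum_ite_mul_log_of_mem_right (hdisj : Disjoint B A) (hpart : B ∪ A = univ)
    (hR_sum : ∑ y ∈ A, R y = 1)
    (hM : IsWatchdogKernel B A R M) (pX : X → ℝ) {x : X} (hx : x ∈ A) :
    (∑ y, if pX x * M x y = 0 then 0
      else pX x * M x y * log (pX x * M x y / (pX x * ∑ x', pX x' * M x' y)))
      = pX x * log (∑ x' ∈ A, pX x')⁻¹ := by
  rw [sum_ite_mul_log_eq_of_forall_ne_zero _ _ _ _ fun y _ h => ?_, ← mul_sum,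
    hM.sum_row_eq_one hpart hR_sum, mul_one]
  have hy : y ∈ A :=
    by_contra fun hy => h (by rw [hM.eq_zero_of_mem_right x hx y hy, mul_zero])
  rw [hM.eq_of_mem_right x hx y hy] at h ⊢
  rw [hM.sum_mul_apply_of_mem_right hdisj hpart pX hy]
  field_simp [left_ne_zero_of_mul h, right_ne_zero_of_mul h]

end Watchdog

theorem stmt_7_general {X : Type*} [Fintype X] [DecidableEq X]
    (pX : X → ℝ)
    (hpX_pos : ∀ x, 0 < pX x)
    (B A : Finset X) (hdisj : Disjoint B A) (hpart : B ∪ A = Finset.univ)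
    (pA : ℝ) (hpA : pA = ∑ x ∈ A, pX x)
    (hA_pos : 0 < pA)
    (R : X → ℝ) (hR_sum : ∑ y ∈ A, R y = 1)
    (M : X → X → ℝ)
    (hMB : ∀ x ∈ B, ∀ x', M x x' = if x' = x then 1 else 0)
    (hMA : ∀ x ∈ A, ∀ x' ∈ A, M x x' = R x')
    (hMA0 : ∀ x ∈ A, ∀ x' ∉ A, M x x' = 0)
    (pXY : X → X → ℝ) (hpXY : ∀ x y, pXY x y = pX x * M x y)
    (pY : X → ℝ) (hpY : ∀ y, pY y = ∑ x, pXY x y)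
    (I HX Hq : ℝ)
    (hI : I = ∑ x, ∑ y, if pXY x y = 0 then 0
      else pXY x y * Real.log (pXY x y / (pX x * pY y)))
    (hHX : HX = -∑ x, pX x * Real.log (pX x))
    (hHq : Hq = -∑ x ∈ A, (pX x / pA) * Real.log (pX x / pA)) :
    I = HX - pA * Hq := by
  have hM : IsWatchdogKernel B A R M := ⟨hMB, hMA, hMA0⟩
  subst hI hHX hHq hpA
  simp only [hpY, hpXY]
  rw [sum_univ_eq_add_of_partition hdisj hpart, sum_univ_eq_add_of_partition hdisj hpart,
    sum_congr rfl fun x => hM.sum_ite_mul_log_of_mem_left hdisj hpart hR_sum pX,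
    sum_congr rfl fun x => hM.sum_ite_mul_log_of_mem_right hdisj hpart hR_sum pX,
    mul_neg, sum_mul_sum_div_mul_log_div A pX (fun x _ => (hpX_pos x).ne') hA_pos.ne']
  simp only [log_inv, mul_neg, sum_neg_distrib, ← sum_mul]
  ring

/-- Utility of the watchdog mechanism, equations (8)–(9): for the
mechanism that publishes `x ∈ B` unchanged and randomizes `x ∈ A` into `A`
according to a pmf `R`, the mutual information satisfies
`I(X;Y) = H(X) − p(A)·H(q)`, where `q(x) = p(x)/p(A)` on `A`
(convention `0·log 0 = 0` via an if-guard). -/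
theorem stmt_7 {S X : Type*} [Fintype S] [Fintype X] [DecidableEq X]
    [Nonempty S] [Nonempty X]
    (p : S → X → ℝ)
    (hp_nonneg : ∀ s x, 0 ≤ p s x)
    (hp_sum : ∑ s, ∑ x, p s x = 1)
    (pX : X → ℝ) (hpX : ∀ x, pX x = ∑ s, p s x)
    (hpX_pos : ∀ x, 0 < pX x)
    (B A : Finset X) (hdisj : Disjoint B A) (hpart : B ∪ A = Finset.univ)
    (pA : ℝ) (hpA : pA = ∑ x ∈ A, pX x)
    (hA_pos : 0 < pA)
    (R : X → ℝ) (hR_nonneg : ∀ y ∈ A, 0 ≤ R y) (hR_sum : ∑ y ∈ A, R y = 1)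
    (M : X → X → ℝ)
    (hMB : ∀ x ∈ B, ∀ x', M x x' = if x' = x then 1 else 0)
    (hMA : ∀ x ∈ A, ∀ x' ∈ A, M x x' = R x')
    (hMA0 : ∀ x ∈ A, ∀ x' ∉ A, M x x' = 0)
    (pXY : X → X → ℝ) (hpXY : ∀ x y, pXY x y = pX x * M x y)
    (pY : X → ℝ) (hpY : ∀ y, pY y = ∑ x, pXY x y)
    (I HX Hq : ℝ)
    (hI : I = ∑ x, ∑ y, if pXY x y = 0 then 0
      else pXY x y * Real.log (pXY x y / (pX x * pY y)))
    (hHX : HX = -∑ x, pX x * Real.log (pX x))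
    (hHq : Hq = -∑ x ∈ A, (pX x / pA) * Real.log (pX x / pA)) :
    I = HX - pA * Hq :=
  stmt_7_general pX hpX_pos B A hdisj hpart pA hpA hA_pos R hR_sum M hMB hMA hMA0 pXY hpXY pY hpY I
    HX Hq hI hHX hHq
end

section
/- (ε-log-lift bounds maximal leakage.) Let S and Y be finite nonempty sets and p a joint probability mass function on S × Y with p(s) > 0 for all s ∈ S and p(s,y) > 0 for all (s,y). If ε ≥ 0 and |log(p(s,y)/(p(s)p(y)))| ≤ ε for all s ∈ S, y ∈ Y, then the maximal leakage I_∞(S;Y) = log ∑_{y∈Y} max_{s∈S} p(s,y)/p(s) satisfies I_∞(S;Y) ≤ ε. -/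
/-- ε-log-lift bounds maximal leakage: if
`|log(p(s,y)/(p(s)p(y)))| ≤ ε` for all `s, y`, then
`I_∞(S;Y) = log ∑_y max_s p(s,y)/p(s) ≤ ε`. -/
theorem stmt_14 {S Y : Type*} [Fintype S] [Fintype Y] [Nonempty S] [Nonempty Y]
    (p : S → Y → ℝ)
    (hp_pos : ∀ s y, 0 < p s y)
    (hp_sum : ∑ s, ∑ y, p s y = 1)
    (pS : S → ℝ) (hpS : ∀ s, pS s = ∑ y, p s y)
    (hpS_pos : ∀ s, 0 < pS s)
    (pY : Y → ℝ) (hpY : ∀ y, pY y = ∑ s, p s y)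
    (ε : ℝ) (hε : 0 ≤ ε)
    (hlift : ∀ s y, |Real.log (p s y / (pS s * pY y))| ≤ ε) :
    Real.log (∑ y, Finset.univ.sup' Finset.univ_nonempty
      (fun s : S => p s y / pS s)) ≤ ε := by
  have hpY_pos : ∀ y, 0 < pY y := by
    intro y
    rw [hpY]
    exact Finset.sum_pos (fun s _ => hp_pos s y) Finset.univ_nonempty
  have hpY_sum : ∑ y, pY y = 1 := by
    simp_rw [hpY]
    rw [Finset.sum_comm]
    exact hp_sum
  have key : ∀ s y, p s y / pS s ≤ Real.exp ε * pY y := by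
    intro s y
    have h1 := (abs_le.mp (hlift s y)).2
    have h2 : p s y / (pS s * pY y) ≤ Real.exp ε := by
      have := Real.exp_le_exp.mpr h1
      rwa [Real.exp_log (div_pos (hp_pos s y) (mul_pos (hpS_pos s) (hpY_pos y)))] at this
    have heq : p s y / pS s = p s y / (pS s * pY y) * pY y := by
      rw [div_mul_eq_mul_div, mul_div_mul_right _ _ (hpY_pos y).ne']
    rw [heq]
    exact mul_le_mul_of_nonneg_right h2 (hpY_pos y).le
  have hsum : (∑ y, Finset.univ.sup' Finset.univ_nonempty
      (fun s : S => p s y / pS s)) ≤ Real.exp ε := by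
    calc (∑ y, Finset.univ.sup' Finset.univ_nonempty (fun s : S => p s y / pS s))
        ≤ ∑ y, Real.exp ε * pY y := by
          apply Finset.sum_le_sum
          intro y _
          exact Finset.sup'_le _ _ (fun s _ => key s y)
      _ = Real.exp ε := by rw [← Finset.mul_sum, hpY_sum, mul_one]
  calc Real.log (∑ y, Finset.univ.sup' Finset.univ_nonempty (fun s : S => p s y / pS s))
      ≤ Real.log (Real.exp ε) := by
        apply Real.log_le_log _ hsum
        apply Finset.sum_pos _ Finset.univ_nonempty
        intro y _
        obtain ⟨s⟩ := ‹Nonempty S›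
        exact lt_of_lt_of_le (div_pos (hp_pos s y) (hpS_pos s)) (Finset.le_sup' (fun s : S => p s y / pS s) (Finset.mem_univ s))
    _ = ε := Real.log_exp ε
end

section
/- (ε-log-lift implies a 2ε differential-privacy-style guarantee on posteriors.) Let S and Y be finite nonempty sets and p a joint probability mass function on S × Y with p(s,y) > 0 for all (s,y). If ε ≥ 0 and |log(p(s,y)/(p(s)p(y)))| ≤ ε for all s ∈ S, y ∈ Y, then for every s ∈ S and every y, y' ∈ Y the posteriors p(s|y) = p(s,y)/p(y) satisfy p(s|y) ≤ e^{2ε} · p(s|y'). -/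
/-! The lift `p(s,y) / (p(s) p(y))` equals `p(s|y) / p(s)`, so the log-lift bound puts every
posterior `p(s|y)` within a factor `e^ε` of the prior `p(s)`; comparing two posteriors through
this common reference costs `e^ε` twice. -/

open Real

lemma le_exp_mul_of_abs_log_div_le {a b ε : ℝ} (ha : 0 < a) (hb : 0 < b)
    (h : |log (a / b)| ≤ ε) : a ≤ exp ε * b := by
  rw [← div_le_iff₀ hb, ← log_le_iff_le_exp (div_pos ha hb)]
  exact (abs_le.mp h).2

lemma le_exp_two_mul_mul_of_abs_log_div_le {a b c ε : ℝ} (ha : 0 < a) (hb : 0 < b) (hc : 0 < c)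
    (hac : |log (a / c)| ≤ ε) (hbc : |log (b / c)| ≤ ε) : a ≤ exp (2 * ε) * b := by
  have hcb : |log (c / b)| ≤ ε := by rwa [← inv_div, log_inv, abs_neg]
  calc a ≤ exp ε * c := le_exp_mul_of_abs_log_div_le ha hc hac
    _ ≤ exp ε * (exp ε * b) := by gcongr; exact le_exp_mul_of_abs_log_div_le hc hb hcb
    _ = exp (2 * ε) * b := by rw [← mul_assoc, ← exp_add, two_mul]

theorem stmt_15_general {S Y : Type*} [Fintype S] [Fintype Y]
    (p : S → Y → ℝ)
    (hp_pos : ∀ s y, 0 < p s y)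
    (pS : S → ℝ) (hpS : ∀ s, pS s = ∑ y, p s y)
    (pY : Y → ℝ) (hpY : ∀ y, pY y = ∑ s, p s y)
    (ε : ℝ)
    (hlift : ∀ s y, |Real.log (p s y / (pS s * pY y))| ≤ ε) :
    ∀ s : S, ∀ y y' : Y,
      p s y / pY y ≤ Real.exp (2 * ε) * (p s y' / pY y') := by
  intro s y y'
  have hpS_pos : 0 < pS s := hpS s ▸ (hp_pos s y).trans_le
    (Finset.single_le_sum (fun y _ => (hp_pos s y).le) (Finset.mem_univ y))
  have hpY_pos : ∀ y, 0 < pY y := fun y => hpY y ▸ (hp_pos s y).trans_le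
    (Finset.single_le_sum (fun s _ => (hp_pos s y).le) (Finset.mem_univ s))
  have hposterior : ∀ y, |log (p s y / pY y / pS s)| ≤ ε := fun y => by
    rw [div_div, mul_comm]; exact hlift s y
  exact le_exp_two_mul_mul_of_abs_log_div_le (div_pos (hp_pos s y) (hpY_pos y))
    (div_pos (hp_pos s y') (hpY_pos y')) hpS_pos (hposterior y) (hposterior y')

/-- ε-log-lift implies a 2ε differential-privacy-style guarantee
on posteriors: if `|log(p(s,y)/(p(s)p(y)))| ≤ ε` for all `s, y`, then
`p(s|y) ≤ e^{2ε} p(s|y')` for all `s, y, y'`, where `p(s|y) = p(s,y)/p(y)`. -/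
theorem stmt_15 {S Y : Type*} [Fintype S] [Fintype Y] [Nonempty S] [Nonempty Y]
    (p : S → Y → ℝ)
    (hp_pos : ∀ s y, 0 < p s y)
    (hp_sum : ∑ s, ∑ y, p s y = 1)
    (pS : S → ℝ) (hpS : ∀ s, pS s = ∑ y, p s y)
    (pY : Y → ℝ) (hpY : ∀ y, pY y = ∑ s, p s y)
    (ε : ℝ) (hε : 0 ≤ ε)
    (hlift : ∀ s y, |Real.log (p s y / (pS s * pY y))| ≤ ε) :
    ∀ s : S, ∀ y y' : Y,
      p s y / pY y ≤ Real.exp (2 * ε) * (p s y' / pY y') :=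
  stmt_15_general p hp_pos pS hpS pY hpY ε hlift
end
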